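/- arXiv:2512.21278 — 2 statements merged into one kernel-verified Lean document; each statement's English description precedes it below -/
import Mathlib

section
/- Let L be a first-order language and let S and T be L-theories such that: (i) every L-formula is equivalent modulo S to an existential positive L-formula (S is a model-complete core theory), and (ii) every model of T admits an L-homomorphism into some model of S. Let M be a model of S, N a model of T, and f : M → N an L-homomorphism. Let φ(x, ȳ) be an existential positive L-formula and b̄ a tuple from M. If the set {a ∈ M : M ⊨ φ(a, b̄)} is infinite, then the set {c ∈ N : N ⊨ φ(c, f(b̄))} is infinite. -/
open FirstOrder FirstOrder.Language

universe u v w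

/-- Existential positive formulas: built from atomic formulas (equalities and relations)
using only conjunction, disjunction, and existential quantification. -/
inductive IsExistentialPositive {L : FirstOrder.Language.{u, v}} {α : Type*} :
    ∀ {n : ℕ}, L.BoundedFormula α n → Prop
  | equal {n : ℕ} (t₁ t₂ : L.Term (α ⊕ Fin n)) :
      IsExistentialPositive (BoundedFormula.equal t₁ t₂)
  | rel {n l : ℕ} (R : L.Relations l) (ts : Fin l → L.Term (α ⊕ Fin n)) :
      IsExistentialPositive (BoundedFormula.rel R ts)
  | inf {n : ℕ} {φ ψ : L.BoundedFormula α n} :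
      IsExistentialPositive φ → IsExistentialPositive ψ → IsExistentialPositive (φ ⊓ ψ)
  | sup {n : ℕ} {φ ψ : L.BoundedFormula α n} :
      IsExistentialPositive φ → IsExistentialPositive ψ → IsExistentialPositive (φ ⊔ ψ)
  | ex {n : ℕ} {φ : L.BoundedFormula α (n + 1)} :
      IsExistentialPositive φ → IsExistentialPositive φ.ex

lemma ep_hom_preserved {L : FirstOrder.Language.{u, v}} {α : Type*} {A B : Type*}
    [L.Structure A] [L.Structure B] (g : A →[L] B) :
    ∀ {n : ℕ} {φ : L.BoundedFormula α n}, IsExistentialPositive φ →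
      ∀ (v : α → A) (xs : Fin n → A), φ.Realize v xs → φ.Realize (g ∘ v) (g ∘ xs) := by
  intro n φ hφ
  induction hφ with
  | equal t₁ t₂ =>
    intro v xs h
    simp only [BoundedFormula.Realize, ← Sum.comp_elim, HomClass.realize_term] at *
    rw [h]
  | rel R ts =>
    intro v xs h
    simp only [BoundedFormula.Realize, ← Sum.comp_elim, HomClass.realize_term] at *
    exact HomClass.map_rel g R _ h
  | inf _ _ ih1 ih2 =>
    intro v xs h
    rw [BoundedFormula.realize_inf] at *
    exact ⟨ih1 v xs h.1, ih2 v xs h.2⟩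
  | sup _ _ ih1 ih2 =>
    intro v xs h
    rw [BoundedFormula.realize_sup] at *
    exact h.elim (fun h => Or.inl (ih1 v xs h)) (fun h => Or.inr (ih2 v xs h))
  | ex _ ih =>
    intro v xs h
    rw [BoundedFormula.realize_ex] at *
    obtain ⟨a, ha⟩ := h
    exact ⟨g a, by rw [← Fin.comp_snoc]; exact ih v _ ha⟩

lemma ep_hom_preserved_formula {L : FirstOrder.Language.{u, v}} {α : Type*} {A B : Type*}
    [L.Structure A] [L.Structure B] (g : A →[L] B) {φ : L.Formula α}
    (hφ : IsExistentialPositive φ) (v : α → A) (h : φ.Realize v) :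
    φ.Realize (g ∘ v) := by
  have hthis := ep_hom_preserved g hφ v default h
  have e : g ∘ (default : Fin 0 → A) = default := Subsingleton.elim _ _
  rwa [e] at hthis


/-- If `S` is a model-complete core theory, every model of `T` maps homomorphically into a
model of `S`, `f : M → N` is a homomorphism from a model of `S` to a model of `T`, and the
existential positive formula `φ(x, b̄)` has infinitely many realisations in `M`, then
`φ(x, f(b̄))` has infinitely many realisations in `N`. -/
theorem hom_to_core_preserves_infinite_realizations {L : FirstOrder.Language.{u, v}}
    (S T : L.Theory)
    (hS : ∀ (n : ℕ) (φ : L.Formula (Fin n)), ∃ θ : L.Formula (Fin n),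
      IsExistentialPositive θ ∧
        ∀ (M : Type w) [L.Structure M] [M ⊨ S] (v : Fin n → M),
          φ.Realize v ↔ θ.Realize v)
    (hhom : ∀ (P : Type w) [iP : L.Structure P] [P ⊨ T],
      ∃ (Q : Type w) (iQ : L.Structure Q),
        @Theory.Model L Q iQ S ∧ Nonempty (@FirstOrder.Language.Hom L P Q iP iQ))
    (M N : Type w) [L.Structure M] [L.Structure N] [M ⊨ S] [N ⊨ T]
    (f : M →[L] N) (m : ℕ) (φ : L.Formula (Fin 1 ⊕ Fin m))
    (hφ : IsExistentialPositive φ) (b : Fin m → M)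
    (hinf : {a : M | φ.Realize (Sum.elim (fun _ => a) b)}.Infinite) :
    {c : N | φ.Realize (Sum.elim (fun _ => c) (fun i => f (b i)))}.Infinite := by
  obtain ⟨Q, iQ, hQS, ⟨g⟩⟩ := hhom N
  haveI := hQS
  obtain ⟨θ, hθ, hθeq⟩ := hS 2 (∼((var 0 : L.Term (Fin 2)).equal (var 1)))
  have hf : Function.Injective f := by
    intro a a' hfa
    by_contra hne
    have h1 : θ.Realize (![a, a'] : Fin 2 → M) := by
      rw [← hθeq M] ; simp [Formula.realize_not, hne]
    have h2 : θ.Realize (g ∘ (f ∘ ![a, a'])) :=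
      ep_hom_preserved_formula g hθ _ (ep_hom_preserved_formula f hθ _ h1)
    rw [← hθeq Q] at h2
    simp only [Formula.realize_not, Formula.realize_equal, Term.realize_var,
      Function.comp_apply] at h2
    exact h2 (by simp [hfa])
  have hsub : f '' {a : M | φ.Realize (Sum.elim (fun _ => a) b)} ⊆
      {c : N | φ.Realize (Sum.elim (fun _ => c) (fun i => f (b i)))} := by
    rintro _ ⟨a, ha, rfl⟩
    have := ep_hom_preserved_formula f hφ _ ha
    rwa [Sum.comp_elim] at this
  exact ((hinf.image hf.injOn).mono hsub)
end

section
/- Let Y = {(a,b,m) : a,b ∈ ℚ, a < b, m ∈ ℤ/4ℤ} with relations: R((a,b,m),(c,d,n)) iff (a,b) = (c,d) and n = m+1; E((a,b,m),(c,d,n)) iff (a,b)_m = (c,d)_n and |{a,b} ∩ {c,d}| = 1, where (a,b)_m denotes a if m ∈ {0,2} and b if m ∈ {1,3}; and N((a,b,m),(c,d,n)) iff {a,b} ∩ {c,d} = ∅. Then the structure 𝔜 = (Y;R,E,N) is a model-complete core: for every map e : Y → Y preserving R, E, N and every finite subset F of Y, there exists a bijection γ : Y → Y such that both γ and γ⁻¹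 preserve R, E, N and e agrees with γ on F. -/
/-- Triples `(a, b, m)` with `a, b ∈ ℚ` and `m ∈ ℤ/4ℤ`. -/
abbrev Trip : Type := ℚ × ℚ × ZMod 4

/-- `(a,b)_m`: equal to `a` if `m ∈ {0,2}` and to `b` if `m ∈ {1,3}`. -/
def selCoord (p : Trip) : ℚ := if p.2.2 = 0 ∨ p.2.2 = 2 then p.1 else p.2.1

/-- The unordered pair `{a, b}` associated with a triple `(a, b, m)`. -/
def pairOf (p : Trip) : Finset ℚ := {p.1, p.2.1}

/-- `R((a,b,m),(c,d,n))` iff `(a,b) = (c,d)` and `n = m + 1`. -/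
def Rrel (u v : Trip) : Prop := u.1 = v.1 ∧ u.2.1 = v.2.1 ∧ v.2.2 = u.2.2 + 1

/-- `E((a,b,m),(c,d,n))` iff `(a,b)_m = (c,d)_n` and `|{a,b} ∩ {c,d}| = 1`. -/
def Erel (u v : Trip) : Prop := selCoord u = selCoord v ∧ (pairOf u ∩ pairOf v).card = 1

/-- `N((a,b,m),(c,d,n))` iff `{a,b} ∩ {c,d} = ∅`. -/
def Nrel (u v : Trip) : Prop := pairOf u ∩ pairOf v = ∅

/-- The domain `Y` of triples `(a, b, m)` with `a < b`. -/
abbrev Ydom : Type := {p : Trip // p.1 < p.2.1}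

/-- A map `Y → Y` preserving the relations `R`, `E`, `N`. -/
def IsHomY (e : Ydom → Ydom) : Prop :=
  (∀ u v : Ydom, Rrel u.1 v.1 → Rrel (e u).1 (e v).1) ∧
  (∀ u v : Ydom, Erel u.1 v.1 → Erel (e u).1 (e v).1) ∧
  (∀ u v : Ydom, Nrel u.1 v.1 → Nrel (e u).1 (e v).1)

/-!
An endomorphism `e` of `𝔜` is determined by two pieces of data. Since any two triples with the
same selected coordinate are joined by a path of length two in `E`, `e` induces a map
`f : ℚ → ℚ` on selected coordinates; `N` forces `f` to be injective, and because `R` cycles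
the selected coordinate through both ends of the pair, `e` sends the pair `{a, b}` to
`{f a, f b}`. Moreover `R` forces `e (a, b, m)` to carry the label `t a b + m` for a shift
`t a b ∈ ℤ/4ℤ`, whose parity records whether `f` preserves the order of `a` and `b`.
Conversely, every such pair `(g, t)` with `g` a permutation of `ℚ` defines an automorphism.
On a finite set `F`, `f` only matters on finitely many rationals, where it extends to a
permutation `g`; keeping `t` on the pairs of `F` and fixing its parity elsewhere gives an
automorphism agreeing with `e` on `F`.
-/

open Function Finset

theorem Finset.pair_eq_pair_of_lt {α : Type*} [LinearOrder α] {a b c d : α}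
    (h : ({a, b} : Finset α) = {c, d}) (hab : a < b) (hcd : c < d) : a = c ∧ b = d := by
  have hs : ({a, b} : Set α) = {c, d} := by
    simpa using congrArg (fun s : Finset α => (s : Set α)) h
  rcases Set.pair_eq_pair_iff.1 hs with h' | ⟨rfl, rfl⟩
  · exact h'
  · exact ((hab.trans hcd).false).elim

theorem Finset.pair_min_max {α : Type*} [LinearOrder α] (x y : α) :
    ({min x y, max x y} : Finset α) = {x, y} := by
  rcases le_total x y with h | h <;> simp [h, pair_comm]

theorem zmod4_parity_add : ∀ s m : ZMod 4,
    (s + m = 0 ∨ s + m = 2) ↔ ((s = 0 ∨ s = 2) ↔ (m = 0 ∨ m = 2)) := by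
  decide

theorem zmod4_parity_succ : ∀ m : ZMod 4, (m + 1 = 0 ∨ m + 1 = 2) ↔ ¬(m = 0 ∨ m = 2) := by
  decide

@[simp]
theorem selCoord_zero (a b : ℚ) : selCoord (a, b, 0) = a := if_pos (Or.inl rfl)

theorem selCoord_mem_pairOf (p : Trip) : selCoord p ∈ pairOf p := by
  unfold selCoord pairOf; split <;> simp

namespace Ydom

def shift (k : ZMod 4) (u : Ydom) : Ydom := ⟨(u.1.1, u.1.2.1, u.1.2.2 + k), u.2⟩

@[simp]
theorem shift_zero (u : Ydom) : shift 0 u = u := by simp [shift]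

theorem shift_shift (k l : ZMod 4) (u : Ydom) : shift k (shift l u) = shift (l + k) u := by
  simp [shift, add_assoc]

theorem selCoord_le (u : Ydom) : selCoord u.1 ≤ u.1.2.1 := by
  unfold selCoord; split
  · exact u.2.le
  · exact le_rfl

theorem coords_eq_of_pairOf_eq {u v : Ydom} (h : pairOf u.1 = pairOf v.1) :
    u.1.1 = v.1.1 ∧ u.1.2.1 = v.1.2.1 :=
  pair_eq_pair_of_lt h u.2 v.2

theorem ext_pairOf {u v : Ydom} (hp : pairOf u.1 = pairOf v.1)
    (hm : u.1.2.2 = v.1.2.2) : u = v := by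
  obtain ⟨h₁, h₂⟩ := coords_eq_of_pairOf_eq hp
  exact Subtype.ext (Prod.ext h₁ (Prod.ext h₂ hm))

theorem rrel_iff {u v : Ydom} :
    Rrel u.1 v.1 ↔ pairOf u.1 = pairOf v.1 ∧ v.1.2.2 = u.1.2.2 + 1 := by
  refine ⟨fun ⟨h₁, h₂, h₃⟩ => ⟨by simp [pairOf, h₁, h₂], h₃⟩,
    fun ⟨hp, hm⟩ => ?_⟩
  obtain ⟨h₁, h₂⟩ := coords_eq_of_pairOf_eq hp
  exact ⟨h₁, h₂, hm⟩

theorem rrel_shift_one (u : Ydom) : Rrel u.1 (shift 1 u).1 := ⟨rfl, rfl, rfl⟩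

theorem eq_shift_one_of_rrel {u v : Ydom} (h : Rrel u.1 v.1) : v = shift 1 u :=
  Subtype.ext (Prod.ext h.1.symm (Prod.ext h.2.1.symm h.2.2))

theorem pairOf_eq_selCoord_shift_one (u : Ydom) :
    pairOf u.1 = {selCoord u.1, selCoord (shift 1 u).1} := by
  by_cases hm : u.1.2.2 = 0 ∨ u.1.2.2 = 2 <;>
    simp [pairOf, selCoord, shift, zmod4_parity_succ, hm, pair_comm]

theorem erel_anchor (u : Ydom) {r : ℚ} (hr : u.1.2.1 < r) :
    Erel u.1 (selCoord u.1, r, 0) := by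
  have hr' : r ∉ pairOf u.1 := by
    simp only [pairOf, mem_insert, mem_singleton, not_or]
    exact ⟨(u.2.trans hr).ne', hr.ne'⟩
  refine ⟨(selCoord_zero _ _).symm, ?_⟩
  rw [show pairOf (selCoord u.1, r, 0) = {selCoord u.1, r} from rfl,
    inter_insert_of_mem (selCoord_mem_pairOf u.1), inter_singleton_of_notMem hr']
  rfl

end Ydom

open Ydom

noncomputable def inducedMap (e : Ydom → Ydom) (q : ℚ) : ℚ :=
  selCoord (e ⟨(q, q + 1, 0), lt_add_one q⟩).1

/-- Junk value `0` when `b ≤ a`. -/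
noncomputable def inducedShift (e : Ydom → Ydom) (a b : ℚ) : ZMod 4 :=
  if h : a < b then (e ⟨(a, b, 0), h⟩).1.2.2 else 0

namespace IsHomY

variable {e : Ydom → Ydom} (he : IsHomY e)
include he

theorem map_shift_one (u : Ydom) : e (shift 1 u) = shift 1 (e u) :=
  eq_shift_one_of_rrel (he.1 _ _ (rrel_shift_one u))

theorem map_shift (k : ZMod 4) (u : Ydom) : e (shift k u) = shift k (e u) := by
  have key : ∀ n : ℕ, e (shift n u) = shift n (e u) := by
    intro n
    induction n with
    | zero => simp
    | succ n ih => rw [Nat.cast_succ, ← shift_shift, he.map_shift_one, ih, shift_shift]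
  simpa using key k.val

theorem selCoord_map_eq {u v : Ydom} (h : selCoord u.1 = selCoord v.1) :
    selCoord (e u).1 = selCoord (e v).1 := by
  set r := max u.1.2.1 v.1.2.1 + 1
  have hu : u.1.2.1 < r := by have := le_max_left u.1.2.1 v.1.2.1; linarith
  have hv : v.1.2.1 < r := by have := le_max_right u.1.2.1 v.1.2.1; linarith
  let w : Ydom := ⟨(selCoord u.1, r, 0), (selCoord_le u).trans_lt hu⟩
  have huw : Erel u.1 w.1 := erel_anchor u hu
  have hvw : Erel v.1 w.1 := by simpa [w, h] using erel_anchor v hv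
  exact (he.2.1 u w huw).1.trans (he.2.1 v w hvw).1.symm

theorem selCoord_map (u : Ydom) : selCoord (e u).1 = inducedMap e (selCoord u.1) :=
  he.selCoord_map_eq (selCoord_zero _ _).symm

theorem pairOf_map (u : Ydom) : pairOf (e u).1 = (pairOf u.1).image (inducedMap e) := by
  rw [pairOf_eq_selCoord_shift_one (e u), ← he.map_shift_one, he.selCoord_map, he.selCoord_map,
    pairOf_eq_selCoord_shift_one u, image_insert, image_singleton]

theorem label_map (u : Ydom) : (e u).1.2.2 = inducedShift e u.1.1 u.1.2.1 + u.1.2.2 := by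
  obtain ⟨⟨a, b, m⟩, h⟩ := u
  have hu : (⟨(a, b, m), h⟩ : Ydom) = shift m ⟨(a, b, 0), h⟩ := by simp [shift]
  rw [hu, he.map_shift]
  simp [shift, inducedShift, h]

theorem inducedMap_injective : Injective (inducedMap e) := by
  intro p q hpq
  by_contra hne
  set r := max p q + 1
  have hp : p < r := by have := le_max_left p q; linarith
  have hq : q < r := by have := le_max_right p q; linarith
  let u : Ydom := ⟨(p, r, 0), hp⟩
  let v : Ydom := ⟨(q, r + 1, 0), hq.trans (lt_add_one r)⟩
  have huv : Nrel u.1 v.1 := by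
    simp only [Nrel, pairOf, eq_empty_iff_forall_notMem, mem_inter, mem_insert, mem_singleton]
    rintro x ⟨h₁ | h₁, h₂ | h₂⟩ <;> first | exact hne (h₁.symm.trans h₂) | linarith
  have hpu : inducedMap e p ∈ pairOf (e u).1 := by
    simpa [he.selCoord_map, u] using selCoord_mem_pairOf (e u).1
  have hqv : inducedMap e p ∈ pairOf (e v).1 := by
    simpa [he.selCoord_map, v, hpq] using selCoord_mem_pairOf (e v).1
  have himg : pairOf (e u).1 ∩ pairOf (e v).1 = ∅ := he.2.2 u v huv
  exact notMem_empty _ (himg ▸ mem_inter.2 ⟨hpu, hqv⟩)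

end IsHomY

def IsRelabeling (g : ℚ → ℚ) (t : ℚ → ℚ → ZMod 4) (γ : Ydom → Ydom) : Prop :=
  ∀ u : Ydom, pairOf (γ u).1 = (pairOf u.1).image g ∧
    selCoord (γ u).1 = g (selCoord u.1) ∧ (γ u).1.2.2 = t u.1.1 u.1.2.1 + u.1.2.2

theorem IsHomY.isRelabeling {e : Ydom → Ydom} (he : IsHomY e) :
    IsRelabeling (inducedMap e) (inducedShift e) e :=
  fun u => ⟨he.pairOf_map u, he.selCoord_map u, he.label_map u⟩

namespace IsRelabeling

variable {g : ℚ → ℚ} {t : ℚ → ℚ → ZMod 4} {γ : Ydom → Ydom}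

section Injective

variable (hγ : IsRelabeling g t γ) (hg : Injective g)
include hγ hg

theorem pairOf_eq_iff {u v : Ydom} :
    pairOf (γ u).1 = pairOf (γ v).1 ↔ pairOf u.1 = pairOf v.1 := by
  rw [(hγ u).1, (hγ v).1, (image_injective hg).eq_iff]

theorem rrel_iff {u v : Ydom} : Rrel (γ u).1 (γ v).1 ↔ Rrel u.1 v.1 := by
  rw [Ydom.rrel_iff, Ydom.rrel_iff, hγ.pairOf_eq_iff hg, (hγ u).2.2, (hγ v).2.2]
  refine and_congr_right fun hp => ?_
  obtain ⟨h₁, h₂⟩ := coords_eq_of_pairOf_eq hp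
  rw [h₁, h₂, add_assoc, add_right_inj]

theorem erel_iff {u v : Ydom} : Erel (γ u).1 (γ v).1 ↔ Erel u.1 v.1 := by
  rw [Erel, Erel, (hγ u).1, (hγ v).1, (hγ u).2.1, (hγ v).2.1, hg.eq_iff,
    ← image_inter _ _ hg, card_image_of_injective _ hg]

theorem nrel_iff {u v : Ydom} : Nrel (γ u).1 (γ v).1 ↔ Nrel u.1 v.1 := by
  rw [Nrel, Nrel, (hγ u).1, (hγ v).1, ← image_inter _ _ hg, image_eq_empty]

theorem isHomY : IsHomY γ :=
  ⟨fun _ _ => (hγ.rrel_iff hg).2, fun _ _ => (hγ.erel_iff hg).2,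
    fun _ _ => (hγ.nrel_iff hg).2⟩

theorem injective : Injective γ := by
  intro u v huv
  have hp : pairOf u.1 = pairOf v.1 := (hγ.pairOf_eq_iff hg).1 (by rw [huv])
  obtain ⟨h₁, h₂⟩ := coords_eq_of_pairOf_eq hp
  have hm := (hγ u).2.2
  rw [huv, (hγ v).2.2, h₁, h₂, add_right_inj] at hm
  exact ext_pairOf hp hm.symm

theorem shift_even_iff {a b : ℚ} (hab : a < b) : (t a b = 0 ∨ t a b = 2) ↔ g a < g b := by
  let u : Ydom := ⟨(a, b, 0), hab⟩
  obtain ⟨hp, hs, hm⟩ := hγ u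
  have hp' : pairOf (γ u).1 = {g a, g b} := by rw [hp]; simp [u, pairOf]
  rw [add_zero] at hm
  rcases lt_or_gt_of_ne (hg.ne hab.ne) with h | h
  · obtain ⟨h₁, h₂⟩ := pair_eq_pair_of_lt hp' (γ u).2 h
    simp only [selCoord, hm, h₁, h₂, u] at hs
    simp only [h, iff_true]
    by_contra hodd
    exact h.ne (by simpa [hodd] using hs.symm)
  · obtain ⟨h₁, h₂⟩ := pair_eq_pair_of_lt (hp'.trans (pair_comm _ _)) (γ u).2 h
    simp only [selCoord, hm, h₁, h₂, u] at hs
    simp only [h.asymm, iff_false]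
    intro heven
    exact h.ne (by simpa [heven] using hs)

end Injective

theorem surjective (hγ : IsRelabeling g t γ) (hg : Surjective g) : Surjective γ := by
  intro v
  obtain ⟨a, ha⟩ := hg v.1.1
  obtain ⟨b, hb⟩ := hg v.1.2.1
  have hab : min a b < max a b := min_lt_max.2 fun h => v.2.ne (by rw [← ha, ← hb, h])
  refine ⟨⟨(min a b, max a b, v.1.2.2 - t (min a b) (max a b)), hab⟩, ext_pairOf ?_ ?_⟩
  · rw [(hγ _).1]
    simp [pairOf, pair_min_max, ha, hb]
  · rw [(hγ _).2.2]
    exact add_sub_cancel _ _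

theorem isHomY_symm (σ : Equiv.Perm Ydom) (hσ : IsRelabeling g t σ) (hg : Injective g) :
    IsHomY σ.symm := by
  refine ⟨fun u v h => (hσ.rrel_iff hg).1 ?_, fun u v h => (hσ.erel_iff hg).1 ?_,
    fun u v h => (hσ.nrel_iff hg).1 ?_⟩ <;> simpa using h

theorem apply_eq {g' : ℚ → ℚ} {t' : ℚ → ℚ → ZMod 4} {γ' : Ydom → Ydom}
    (hγ : IsRelabeling g t γ) (hγ' : IsRelabeling g' t' γ') {u : Ydom}
    (hg : Set.EqOn g g' (pairOf u.1)) (ht : t u.1.1 u.1.2.1 = t' u.1.1 u.1.2.1) :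
    γ u = γ' u :=
  ext_pairOf (by rw [(hγ u).1, (hγ' u).1, image_congr hg])
    (by rw [(hγ u).2.2, (hγ' u).2.2, ht])

end IsRelabeling

def relabel {g : ℚ → ℚ} (hg : Injective g) (t : ℚ → ℚ → ZMod 4) (u : Ydom) : Ydom :=
  ⟨(min (g u.1.1) (g u.1.2.1), max (g u.1.1) (g u.1.2.1), t u.1.1 u.1.2.1 + u.1.2.2),
    min_lt_max.2 (hg.ne u.2.ne)⟩

theorem isRelabeling_relabel {g : ℚ → ℚ} (hg : Injective g) {t : ℚ → ℚ → ZMod 4}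
    (ht : ∀ a b, a < b → ((t a b = 0 ∨ t a b = 2) ↔ g a < g b)) :
    IsRelabeling g t (relabel hg t) := by
  refine fun u => ⟨by simp [relabel, pairOf, pair_min_max], ?_, rfl⟩
  obtain ⟨⟨a, b, m⟩, hab⟩ := u
  have hpar := zmod4_parity_add (t a b) m
  rcases lt_or_gt_of_ne (hg.ne hab.ne) with h | h
  · have := (ht a b hab).2 h
    by_cases hm : m = 0 ∨ m = 2 <;> simp_all [relabel, selCoord, h.le]
  · have := mt (ht a b hab).1 h.asymm
    by_cases hm : m = 0 ∨ m = 2 <;> simp_all [relabel, selCoord, h.le]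

/-- The structure `𝔜 = (Y; R, E, N)` is a model-complete core: every endomorphism agrees
with an automorphism on every finite subset of the domain. -/
theorem Y_model_complete_core (e : Ydom → Ydom) (he : IsHomY e) (F : Finset Ydom) :
    ∃ γ : Equiv.Perm Ydom, IsHomY ⇑γ ∧ IsHomY ⇑γ.symm ∧ ∀ x ∈ F, e x = γ x := by
  classical
  set f := inducedMap e
  set S := F.biUnion fun x => pairOf x.1
  obtain ⟨g, hgf⟩ := Equiv.Perm.exists_extending_pair (fun q : S => (q : ℚ)) (fun q => f q)
    Subtype.val_injective (he.inducedMap_injective.comp Subtype.val_injective)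
  set t : ℚ → ℚ → ZMod 4 := fun a b =>
    if (g a < g b ↔ f a < f b) then inducedShift e a b else inducedShift e a b + 1
  have ht : ∀ a b, a < b → ((t a b = 0 ∨ t a b = 2) ↔ g a < g b) := by
    intro a b hab
    have hs := he.isRelabeling.shift_even_iff he.inducedMap_injective hab
    by_cases h : g a < g b ↔ f a < f b <;>
      simp only [t, h, if_true, if_false, zmod4_parity_succ] <;> tauto
  have hγ := isRelabeling_relabel g.injective ht
  let γ := Equiv.ofBijective _ ⟨hγ.injective g.injective, hγ.surjective g.surjective⟩
  refine ⟨γ, hγ.isHomY g.injective, hγ.isHomY_symm γ g.injective, fun x hx => ?_⟩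
  have hfg : Set.EqOn f g (pairOf x.1) := fun q hq =>
    (hgf ⟨q, mem_biUnion.2 ⟨x, hx, hq⟩⟩).symm
  refine he.isRelabeling.apply_eq hγ hfg ?_
  have ha : x.1.1 ∈ pairOf x.1 := mem_insert_self _ _
  have hb : x.1.2.1 ∈ pairOf x.1 := mem_insert_of_mem (mem_singleton_self _)
  simp [t, hfg ha, hfg hb]
end
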